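/- arXiv:2508.18660 — 12 statements merged into one kernel-verified Lean document; each statement's English description precedes it below -/
import Mathlib

section
/- For every integer q ≥ 2, the greatest common divisor of n₁ = q(q⁷+q⁶+q⁵+q⁴+q³+q²+q+1)(q³+1) and n₂ = q⁸(q⁴+q³+q²+q+1)(q⁴+1) divides q(q⁴+1). -/
/-- For every integer `q ≥ 2`, the gcd of
`n₁ = q(q⁷+q⁶+q⁵+q⁴+q³+q²+q+1)(q³+1)` and `n₂ = q⁸(q⁴+q³+q²+q+1)(q⁴+1)`
divides `q(q⁴+1)`. -/
theorem e6_p1_subdegree_gcd (q : ℕ) (hq : 2 ≤ q) :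
    Nat.gcd
      (q * (q ^ 7 + q ^ 6 + q ^ 5 + q ^ 4 + q ^ 3 + q ^ 2 + q + 1) * (q ^ 3 + 1))
      (q ^ 8 * (q ^ 4 + q ^ 3 + q ^ 2 + q + 1) * (q ^ 4 + 1)) ∣
      q * (q ^ 4 + 1) := by
  set n₁ := q * (q ^ 7 + q ^ 6 + q ^ 5 + q ^ 4 + q ^ 3 + q ^ 2 + q + 1) * (q ^ 3 + 1)
  set n₂ := q ^ 8 * (q ^ 4 + q ^ 3 + q ^ 2 + q + 1) * (q ^ 4 + 1)
  have h1 : (Nat.gcd n₁ n₂ : ℤ) ∣ (n₁ : ℤ) := Int.natCast_dvd_natCast.mpr (Nat.gcd_dvd_left _ _)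
  have h2 : (Nat.gcd n₁ n₂ : ℤ) ∣ (n₂ : ℤ) := Int.natCast_dvd_natCast.mpr (Nat.gcd_dvd_right _ _)
  rw [← Int.natCast_dvd_natCast]
  have key : ((q : ℤ) ^ 10 - q ^ 9 + q ^ 8 + q ^ 6 - q ^ 5 + 2 * q ^ 4 - q ^ 3 - q + 1) * (n₁ : ℤ)
      + ((q : ℤ) ^ 4 - q ^ 5 - q ^ 3 - q ^ 2 + q - 2) * (n₂ : ℤ)
      = ((q * (q ^ 4 + 1) : ℕ) : ℤ) := by
    simp only [n₁, n₂]
    push_cast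
    ring
  calc (Nat.gcd n₁ n₂ : ℤ) ∣ _ := dvd_add (Dvd.dvd.mul_left h1 _) (Dvd.dvd.mul_left h2 _)
    _ = _ := key
end

section
/- For every integer q₀ ≥ 2, gcd( q₀²(q₀²+1)(q₀−1) , q₀⁴(q₀⁴−q₀²+1)(q₀²+q₀+1) − 1 ) divides 20. -/
/-- For every integer `q₀ ≥ 2`,
`gcd(q₀²(q₀²+1)(q₀-1), q₀⁴(q₀⁴-q₀²+1)(q₀²+q₀+1) - 1)` divides `20`. -/
theorem suzuki_subfield_gcd (q₀ : ℕ) (hq : 2 ≤ q₀) :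
    Nat.gcd (q₀ ^ 2 * (q₀ ^ 2 + 1) * (q₀ - 1))
      (q₀ ^ 4 * (q₀ ^ 4 - q₀ ^ 2 + 1) * (q₀ ^ 2 + q₀ + 1) - 1) ∣ 20 := by
  set d := Nat.gcd (q₀ ^ 2 * (q₀ ^ 2 + 1) * (q₀ - 1))
      (q₀ ^ 4 * (q₀ ^ 4 - q₀ ^ 2 + 1) * (q₀ ^ 2 + q₀ + 1) - 1) with hd
  have h1' : 1 ≤ q₀ := le_trans (by norm_num) hq
  have h2 : q₀ ^ 2 ≤ q₀ ^ 4 := Nat.pow_le_pow_right h1' (by norm_num)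
  have h3 : 1 ≤ q₀ ^ 4 * (q₀ ^ 4 - q₀ ^ 2 + 1) * (q₀ ^ 2 + q₀ + 1) :=
    Nat.one_le_iff_ne_zero.mpr (by positivity)
  have q : ℤ := q₀
  have ha : (d : ℤ) ∣ (q₀ : ℤ) ^ 2 * ((q₀ : ℤ) ^ 2 + 1) * ((q₀ : ℤ) - 1) := by
    have := Int.natCast_dvd_natCast.mpr (Nat.gcd_dvd_left (q₀ ^ 2 * (q₀ ^ 2 + 1) * (q₀ - 1))
      (q₀ ^ 4 * (q₀ ^ 4 - q₀ ^ 2 + 1) * (q₀ ^ 2 + q₀ + 1) - 1))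
    rw [← hd, Nat.cast_mul, Nat.cast_sub h1'] at this
    exact_mod_cast this
  have hb : (d : ℤ) ∣ (q₀ : ℤ) ^ 4 * ((q₀ : ℤ) ^ 4 - (q₀ : ℤ) ^ 2 + 1) * ((q₀ : ℤ) ^ 2 + (q₀ : ℤ) + 1) - 1 := by
    have := Int.natCast_dvd_natCast.mpr (Nat.gcd_dvd_right (q₀ ^ 2 * (q₀ ^ 2 + 1) * (q₀ - 1))
      (q₀ ^ 4 * (q₀ ^ 4 - q₀ ^ 2 + 1) * (q₀ ^ 2 + q₀ + 1) - 1))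
    rw [← hd, Nat.cast_sub h3, Nat.cast_mul, Nat.cast_mul, Nat.cast_add, Nat.cast_sub h2] at this
    exact_mod_cast this
  have key : (d : ℤ) ∣ 20 := by
    have := Dvd.dvd.linear_comb ha hb
      (-3 - 9*(q₀:ℤ) - 47*(q₀:ℤ)^2 - 61*(q₀:ℤ)^3 - 20*(q₀:ℤ)^4 + 23*(q₀:ℤ)^5 + 9*(q₀:ℤ)^6
        - 36*(q₀:ℤ)^7 - 48*(q₀:ℤ)^8 - 21*(q₀:ℤ)^9)
      (-20 + 3*(q₀:ℤ)^2 + 6*(q₀:ℤ)^3 + 21*(q₀:ℤ)^4)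
    have heq : (-3 - 9*(q₀:ℤ) - 47*(q₀:ℤ)^2 - 61*(q₀:ℤ)^3 - 20*(q₀:ℤ)^4 + 23*(q₀:ℤ)^5 + 9*(q₀:ℤ)^6
        - 36*(q₀:ℤ)^7 - 48*(q₀:ℤ)^8 - 21*(q₀:ℤ)^9) * ((q₀ : ℤ) ^ 2 * ((q₀ : ℤ) ^ 2 + 1) * ((q₀ : ℤ) - 1))
        + (-20 + 3*(q₀:ℤ)^2 + 6*(q₀:ℤ)^3 + 21*(q₀:ℤ)^4) *
          ((q₀ : ℤ) ^ 4 * ((q₀ : ℤ) ^ 4 - (q₀ : ℤ) ^ 2 + 1) * ((q₀ : ℤ) ^ 2 + (q₀ : ℤ) + 1) - 1) = 20 := by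
      ring
    rwa [heq] at this
  exact_mod_cast key
end

section
/- For every integer q ≥ 2, gcd( q⁴(q⁶−1)(q²−1) , q⁸(q⁸+q⁴+1) − 1 ) divides 4. -/
/-- If `a ∣ b^2` then `a ∣ (gcd a b)^2`. -/
lemma dvd_gcd_sq {a b : ℕ} (h : a ∣ b ^ 2) : a ∣ (Nat.gcd a b) ^ 2 := by
  rcases Nat.eq_zero_or_pos a with rfl | ha
  · simpa using h
  set g := Nat.gcd a b with hg
  have hg0 : 0 < g := Nat.gcd_pos_of_pos_left b ha
  have hag : g ∣ a := Nat.gcd_dvd_left a b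
  have hbg : g ∣ b := Nat.gcd_dvd_right a b
  obtain ⟨a', ha'⟩ := hag
  obtain ⟨b', hb'⟩ := hbg
  have hcop : Nat.Coprime a' b' := by
    have ha'' : a' = a / g := by rw [ha', Nat.mul_div_cancel_left _ hg0]
    have hb'' : b' = b / g := by rw [hb', Nat.mul_div_cancel_left _ hg0]
    rw [ha'', hb'']
    exact Nat.coprime_div_gcd_div_gcd hg0
  have h2 : a' ∣ g * b' ^ 2 := by
    have : g * a' ∣ g * (g * b' ^ 2) := by
      calc g * a' = a := ha'.symm
        _ ∣ b ^ 2 := h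
        _ = g * (g * b' ^ 2) := by rw [hb']; ring
    exact (Nat.mul_dvd_mul_iff_left hg0).mp this
  have h3 : a' ∣ g := (Nat.Coprime.pow_right 2 hcop).dvd_of_dvd_mul_right h2
  calc a = g * a' := ha'
    _ ∣ g * g := Nat.mul_dvd_mul_left g h3
    _ = g ^ 2 := (sq g).symm

/-- For every integer `q ≥ 2`, `gcd(q⁴(q⁶-1)(q²-1), q⁸(q⁸+q⁴+1) - 1)` divides `4`. -/
theorem d4_a1a1_gcd (q : ℕ) (hq : 2 ≤ q) :
    Nat.gcd (q ^ 4 * (q ^ 6 - 1) * (q ^ 2 - 1)) (q ^ 8 * (q ^ 8 + q ^ 4 + 1) - 1) ∣ 4 := by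
  have hq1 : 1 ≤ q := le_trans one_le_two hq
  have hq2 : 4 ≤ q ^ 2 := by nlinarith
  have hq6 : 1 ≤ q ^ 6 := Nat.one_le_pow _ _ (lt_of_lt_of_le Nat.zero_lt_two hq)
  have hq4 : q ^ 2 ≤ q ^ 4 := Nat.pow_le_pow_right hq1 (by norm_num)
  set M := q ^ 4 * (q ^ 6 - 1) * (q ^ 2 - 1) with hM
  set N := q ^ 8 * (q ^ 8 + q ^ 4 + 1) - 1 with hN
  have hq8 : 256 ≤ q ^ 8 := by calc (256:ℕ) = 2 ^ 8 := by norm_num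
                                   _ ≤ q ^ 8 := Nat.pow_le_pow_left hq 8
  have hNbig : 16 ≤ q ^ 8 * (q ^ 8 + q ^ 4 + 1) := by nlinarith
  have hN1 : N + 1 = q ^ 8 * (q ^ 8 + q ^ 4 + 1) := by omega
  set d := Nat.gcd M N with hd
  have hdN : d ∣ N := Nat.gcd_dvd_right M N
  have hdM : d ∣ M := Nat.gcd_dvd_left M N
  -- d is coprime to q
  have hcq : Nat.Coprime d q := by
    have h1 : Nat.gcd d q ∣ N := dvd_trans (Nat.gcd_dvd_left d q) hdN
    have h2 : Nat.gcd d q ∣ N + 1 := by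
      rw [hN1]
      exact dvd_trans (Nat.gcd_dvd_right d q) (dvd_mul_of_dvd_left (dvd_pow_self q (by norm_num)) _)
    have := Nat.dvd_sub h2 h1
    simpa using this
  -- d is coprime to q^4+q^2+1
  have hcc : Nat.Coprime d (q ^ 4 + q ^ 2 + 1) := by
    have hfac : (q ^ 4 + q ^ 2 + 1) * (q ^ 4 - q ^ 2 + 1) = q ^ 8 + q ^ 4 + 1 := by
      zify [hq4]; ring
    have h2 : Nat.gcd d (q ^ 4 + q ^ 2 + 1) ∣ N + 1 := by
      rw [hN1, ← hfac]
      exact dvd_trans (Nat.gcd_dvd_right _ _) ⟨q ^ 8 * (q ^ 4 - q ^ 2 + 1), by ring⟩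
    have h1 : Nat.gcd d (q ^ 4 + q ^ 2 + 1) ∣ N := dvd_trans (Nat.gcd_dvd_left _ _) hdN
    have := Nat.dvd_sub h2 h1
    simpa using this
  -- d divides (q^2-1)^2
  have hfac6 : q ^ 6 - 1 = (q ^ 2 - 1) * (q ^ 4 + q ^ 2 + 1) := by
    have h2 : 1 ≤ q ^ 2 := by omega
    zify [hq6, h2]; ring
  have hMeq : M = q ^ 4 * (q ^ 4 + q ^ 2 + 1) * (q ^ 2 - 1) ^ 2 := by
    rw [hM, hfac6]; ring
  have hcop2 : Nat.Coprime d (q ^ 4 * (q ^ 4 + q ^ 2 + 1)) :=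
    Nat.Coprime.mul_right (hcq.pow_right 4) hcc
  have hda2 : d ∣ (q ^ 2 - 1) ^ 2 := by
    have : d ∣ q ^ 4 * (q ^ 4 + q ^ 2 + 1) * (q ^ 2 - 1) ^ 2 := hMeq ▸ hdM
    exact hcop2.dvd_of_dvd_mul_left this
  -- gcd d (q^2-1) divides 2
  have hg2 : Nat.gcd d (q ^ 2 - 1) ∣ 2 := by
    have hdiv : (q ^ 2 - 1) ∣ (N - 2) := by
      have hNval : (N : ℤ) - 2 = (q : ℤ) ^ 16 + q ^ 12 + q ^ 8 - 3 := by
        have : (N : ℤ) = (q : ℤ) ^ 8 * (q ^ 8 + q ^ 4 + 1) - 1 := by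
          rw [hN]
          push_cast [Nat.cast_sub (by omega : 1 ≤ q ^ 8 * (q ^ 8 + q ^ 4 + 1))]
          ring
        rw [this]; ring
      have hzdvd : ((q : ℤ) ^ 2 - 1) ∣ ((N : ℤ) - 2) := by
        rw [hNval]
        exact ⟨(q : ℤ) ^ 14 + q ^ 12 + 2 * q ^ 10 + 2 * q ^ 8 + 3 * q ^ 6 + 3 * q ^ 4
          + 3 * q ^ 2 + 3, by ring⟩
      have hcast : ((q ^ 2 - 1 : ℕ) : ℤ) = (q : ℤ) ^ 2 - 1 := by
        push_cast [Nat.cast_sub (by omega : 1 ≤ q ^ 2)]; ring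
      have hcast2 : ((N - 2 : ℕ) : ℤ) = (N : ℤ) - 2 := by
        push_cast [Nat.cast_sub (by omega : 2 ≤ N)]; ring
      rw [← Int.natCast_dvd_natCast, hcast, hcast2]
      exact hzdvd
    have h1 : Nat.gcd d (q ^ 2 - 1) ∣ N := dvd_trans (Nat.gcd_dvd_left _ _) hdN
    have h2 : Nat.gcd d (q ^ 2 - 1) ∣ N - 2 := dvd_trans (Nat.gcd_dvd_right _ _) hdiv
    have := Nat.dvd_sub h1 h2
    have hN2 : 2 ≤ N := by omega
    have heq : N - (N - 2) = 2 := by omega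
    rwa [heq] at this
  -- conclude
  have hkey : d ∣ (Nat.gcd d (q ^ 2 - 1)) ^ 2 := dvd_gcd_sq hda2
  calc d ∣ (Nat.gcd d (q ^ 2 - 1)) ^ 2 := hkey
    _ ∣ 2 ^ 2 := pow_dvd_pow_of_dvd hg2 2
    _ = 4 := by norm_num
end

section
/- For every integer q ≥ 2, gcd( q⁶(q⁶−1)(q²−1) , q⁶(q⁸+q⁴+1) − 1 ) divides 4. -/
/-!
Write `v - 1 = q⁶(q⁸ + q⁴ + 1) - 1`. Together with `v - 1`, the three factors `q⁶`, `q⁶ - 1`,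
`q² - 1` of the first argument generate ideals of `ℤ` containing `1`, `2` and `2` respectively
(explicit Bézout identities, valid for every integer `q`). Multiplying these ideals shows that `4`
is an integer combination of `q⁶(q⁶ - 1)(q² - 1)` and `v - 1`.
-/

open Ideal

theorem Ideal.mul_mem_span_pair {R : Type*} [CommRing R] {a a' b c c' : R}
    (h : c ∈ span {a, b}) (h' : c' ∈ span {a', b}) : c * c' ∈ span {a * a', b} := by
  obtain ⟨u, v, rfl⟩ := mem_span_pair.mp h
  obtain ⟨u', v', rfl⟩ := mem_span_pair.mp h'
  exact mem_span_pair.mpr ⟨u * u', u * a * v' + v * (u' * a' + v' * b), by ring⟩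

theorem Int.gcd_dvd_of_mem_span_pair {a b : ℤ} {n : ℕ} (h : (n : ℤ) ∈ span {a, b}) :
    Int.gcd a b ∣ n := by
  obtain ⟨u, v, huv⟩ := mem_span_pair.mp h
  exact Int.gcd_dvd_iff.mpr ⟨u, v, by rw [← huv]; ring⟩

section

variable (x : ℤ)

theorem one_mem_span_pow_six : (1 : ℤ) ∈ span {x ^ 6, x ^ 6 * (x ^ 8 + x ^ 4 + 1) - 1} :=
  mem_span_pair.mpr ⟨x ^ 8 + x ^ 4 + 1, -1, by ring⟩

theorem two_mem_span_pow_six_sub_one :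
    (2 : ℤ) ∈ span {x ^ 6 - 1, x ^ 6 * (x ^ 8 + x ^ 4 + 1) - 1} :=
  mem_span_pair.mpr
    ⟨-(x ^ 12 + x ^ 10 + 2 * x ^ 6 + x ^ 4 + x ^ 2 + 1), x ^ 4 + x ^ 2 - 1, by ring⟩

theorem two_mem_span_sq_sub_one :
    (2 : ℤ) ∈ span {x ^ 2 - 1, x ^ 6 * (x ^ 8 + x ^ 4 + 1) - 1} :=
  mem_span_pair.mpr
    ⟨-(x ^ 12 + x ^ 10 + 2 * x ^ 8 + 2 * x ^ 6 + 3 * x ^ 4 + 3 * x ^ 2 + 3), 1, by ring⟩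

theorem int_gcd_pow_six_mul_dvd_four :
    Int.gcd (x ^ 6 * (x ^ 6 - 1) * (x ^ 2 - 1)) (x ^ 6 * (x ^ 8 + x ^ 4 + 1) - 1) ∣ 4 := by
  have h := mul_mem_span_pair (mul_mem_span_pair (one_mem_span_pow_six x)
    (two_mem_span_pow_six_sub_one x)) (two_mem_span_sq_sub_one x)
  exact Int.gcd_dvd_of_mem_span_pair (n := 4) (by convert h using 1; norm_num)

end

/-- For every integer `q ≥ 2`, `gcd(q⁶(q⁶-1)(q²-1), q⁶(q⁸+q⁴+1) - 1)` divides `4`. -/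
theorem d4_g2_gcd (q : ℕ) (hq : 2 ≤ q) :
    Nat.gcd (q ^ 6 * (q ^ 6 - 1) * (q ^ 2 - 1)) (q ^ 6 * (q ^ 8 + q ^ 4 + 1) - 1) ∣ 4 := by
  have hq₁ : 1 ≤ q := by omega
  have h₂ : 1 ≤ q ^ 2 := Nat.one_le_pow _ _ hq₁
  have h₆ : 1 ≤ q ^ 6 := Nat.one_le_pow _ _ hq₁
  have hv : 1 ≤ q ^ 6 * (q ^ 8 + q ^ 4 + 1) := Nat.one_le_iff_ne_zero.mpr (by positivity)
  rw [← Int.gcd_natCast_natCast]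
  push_cast [h₂, h₆, hv]
  exact int_gcd_pow_six_mul_dvd_four q
end

section
/- For ε ∈ {1, −1}, there do not exist integers q ≥ 2, m ≥ 1 and k ≥ 1 such that 2m(k+1) = q³ − ε and 2k² = q³(q³ + ε). -/
/-- For `ε ∈ {1, -1}`, there do not exist integers `q ≥ 2`, `m ≥ 1` and `k ≥ 1`
such that `2m(k+1) = q³ - ε` and `2k² = q³(q³ + ε)`. -/
theorem g2_odd_diophantine (ε : ℤ) (hε : ε = 1 ∨ ε = -1) :
    ¬ ∃ q m k : ℤ, 2 ≤ q ∧ 1 ≤ m ∧ 1 ≤ k ∧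
      2 * m * (k + 1) = q ^ 3 - ε ∧ 2 * k ^ 2 = q ^ 3 * (q ^ 3 + ε) := by
  rintro ⟨q, m, k, hq, hm, hk, h1, h2⟩
  have hq3 : (8 : ℤ) ≤ q ^ 3 := by calc (8:ℤ) = 2 ^ 3 := by norm_num
    _ ≤ q ^ 3 := pow_le_pow_left₀ (by norm_num) hq 3
  have hle : 2 * (k + 1) ≤ q ^ 3 - ε := by
    calc 2 * (k + 1) = 2 * 1 * (k + 1) := by ring
    _ ≤ 2 * m * (k + 1) := by
        apply mul_le_mul_of_nonneg_right (by linarith) (by linarith)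
    _ = q ^ 3 - ε := h1
  rcases hε with rfl | rfl <;> nlinarith [sq_nonneg (q ^ 3 - 2 * k), sq_nonneg k]
end

section
/- For ε ∈ {1, −1}, there do not exist integers q ≥ 3, m ≥ 1 and k ≥ 1 such that m(k+1) = q³ − ε and 2k² = q³(q³ + ε). -/
/-- For `ε ∈ {1, -1}`, there do not exist integers `q ≥ 3`, `m ≥ 1` and `k ≥ 1`
such that `m(k+1) = q³ - ε` and `2k² = q³(q³ + ε)`. -/
theorem g2_even_diophantine (ε : ℤ) (hε : ε = 1 ∨ ε = -1) :
    ¬ ∃ q m k : ℤ, 3 ≤ q ∧ 1 ≤ m ∧ 1 ≤ k ∧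
      m * (k + 1) = q ^ 3 - ε ∧ 2 * k ^ 2 = q ^ 3 * (q ^ 3 + ε) := by
  rintro ⟨q, m, k, hq, hm, hk, h1, h2⟩
  have hN : (27:ℤ) ≤ q ^ 3 := by
    have := pow_le_pow_left₀ (by norm_num : (0:ℤ) ≤ 3) hq 3
    norm_num at this
    linarith
  rcases hε with rfl | rfl
  · rcases lt_or_ge m 2 with hm2 | hm2
    · have hm1 : m = 1 := by omega
      subst hm1
      have hk1 : k = q ^ 3 - 2 := by linarith
      subst hk1
      nlinarith
    · have h3 : 2 * (k + 1) ≤ q ^ 3 - 1 := by nlinarith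
      nlinarith [sq_nonneg (2 * k - q ^ 3 + 3)]
  · rcases lt_or_ge m 2 with hm2 | hm2
    · have hm1 : m = 1 := by omega
      subst hm1
      have hk1 : k = q ^ 3 := by linarith
      subst hk1
      nlinarith
    · have h3 : 2 * (k + 1) ≤ q ^ 3 + 1 := by nlinarith
      nlinarith [sq_nonneg (2 * k - q ^ 3 + 1)]
end

section
/- For every integer q ≥ 2, gcd( q²(q²−1)² , q⁴(q⁴+q²+1) − 1 ) divides 4. -/
/-- For every integer `q ≥ 2`, `gcd(q²(q²-1)², q⁴(q⁴+q²+1) - 1)` divides `4`. -/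
theorem g2_a1a1_gcd (q : ℕ) (hq : 2 ≤ q) :
    Nat.gcd (q ^ 2 * (q ^ 2 - 1) ^ 2) (q ^ 4 * (q ^ 4 + q ^ 2 + 1) - 1) ∣ 4 := by
  have hq2 : 4 ≤ q ^ 2 := by nlinarith
  obtain ⟨e, he⟩ : ∃ e, q ^ 2 = e + 1 := ⟨q ^ 2 - 1, by omega⟩
  set c : ℕ := e ^ 3 + 5 * e ^ 2 + 10 * e + 9 with hc
  set a : ℕ := q ^ 2 * (q ^ 2 - 1) ^ 2 with ha
  set b : ℕ := q ^ 4 * (q ^ 4 + q ^ 2 + 1) - 1 with hbdef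
  have h4 : q ^ 4 = (e + 1) ^ 2 := by rw [show q ^ 4 = (q ^ 2) ^ 2 by ring, he]
  have hbig : q ^ 4 * (q ^ 4 + q ^ 2 + 1) = e * c + 3 := by
    rw [h4, he, hc]; ring
  have hb : b = e * c + 2 := by omega
  have hae : a = q ^ 2 * e ^ 2 := by
    rw [ha, show q ^ 2 - 1 = e by omega]
  set d : ℕ := Nat.gcd a b with hd
  have hda : d ∣ a := Nat.gcd_dvd_left a b
  have hdb : d ∣ b := Nat.gcd_dvd_right a b
  -- d divides 4 * q^2
  have hA : d ∣ q ^ 2 * (e * c + 2) ^ 2 := by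
    rw [← hb]; exact Dvd.dvd.mul_left (dvd_pow hdb (by norm_num)) _
  have hB : d ∣ q ^ 2 * e ^ 2 * c ^ 2 := (hae ▸ hda).mul_right _
  have key1 : q ^ 2 * (e * c + 2) ^ 2 - q ^ 2 * e ^ 2 * c ^ 2 = 4 * q ^ 2 * (e * c) + 4 * q ^ 2 := by
    have : q ^ 2 * (e * c + 2) ^ 2 = q ^ 2 * e ^ 2 * c ^ 2 + (4 * q ^ 2 * (e * c) + 4 * q ^ 2) := by
      ring
    omega
  have hC : d ∣ 4 * q ^ 2 * (e * c) + 4 * q ^ 2 := key1 ▸ Nat.dvd_sub hA hB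
  have hD : d ∣ 4 * q ^ 2 * (e * c) + 8 * q ^ 2 := by
    have : 4 * q ^ 2 * (e * c) + 8 * q ^ 2 = 4 * q ^ 2 * b := by rw [hb]; ring
    rw [this]; exact hdb.mul_left _
  have hq2d : d ∣ 4 * q ^ 2 := by
    have := Nat.dvd_sub hD hC
    have heq : 4 * q ^ 2 * (e * c) + 8 * q ^ 2 - (4 * q ^ 2 * (e * c) + 4 * q ^ 2) = 4 * q ^ 2 := by
      omega
    rwa [heq] at this
  -- d is coprime to q
  have hcop : Nat.Coprime d q := by
    have hg1 : Nat.gcd d q ∣ b := (Nat.gcd_dvd_left d q).trans hdb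
    have hg2 : Nat.gcd d q ∣ b + 1 := by
      have hq4 : q ∣ q ^ 4 * (q ^ 4 + q ^ 2 + 1) := ⟨q ^ 3 * (q ^ 4 + q ^ 2 + 1), by ring⟩
      have : b + 1 = q ^ 4 * (q ^ 4 + q ^ 2 + 1) := by omega
      exact this ▸ (Nat.gcd_dvd_right d q).trans hq4
    have : Nat.gcd d q ∣ 1 := by
      have := Nat.dvd_sub hg2 hg1
      simpa using this
    exact Nat.dvd_one.mp this
  have h1 : d ∣ 4 * q := by
    have : (4 : ℕ) * q ^ 2 = 4 * q * q := by ring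
    exact hcop.dvd_of_dvd_mul_right (this ▸ hq2d)
  exact hcop.dvd_of_dvd_mul_right h1
end

section
/- For every integer q ≥ 2, gcd( q³(q³+1)(q−1) , q³(q³−1)(q+1) − 1 ) divides 7. -/
/-- For every integer `q ≥ 2`, `gcd(q³(q³+1)(q-1), q³(q³-1)(q+1) - 1)` divides `7`. -/
theorem g2_ree_gcd (q : ℕ) (hq : 2 ≤ q) :
    Nat.gcd (q ^ 3 * (q ^ 3 + 1) * (q - 1)) (q ^ 3 * (q ^ 3 - 1) * (q + 1) - 1) ∣ 7 := by
  have h8 : 8 ≤ q ^ 3 := by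
    calc (8 : ℕ) = 2 ^ 3 := by norm_num
    _ ≤ q ^ 3 := Nat.pow_le_pow_left hq 3
  have hqsq : q ≤ q ^ 2 := by nlinarith
  set g := Nat.gcd (q ^ 3 * (q ^ 3 + 1) * (q - 1)) (q ^ 3 * (q ^ 3 - 1) * (q + 1) - 1)
    with hgdef
  have hgN : g ∣ q ^ 3 * (q ^ 3 + 1) * (q - 1) := Nat.gcd_dvd_left _ _
  have hgM : g ∣ q ^ 3 * (q ^ 3 - 1) * (q + 1) - 1 := Nat.gcd_dvd_right _ _
  have hpos : 1 ≤ q ^ 3 * (q ^ 3 - 1) * (q + 1) := by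
    have h1 : 1 ≤ q ^ 3 - 1 := by omega
    have h2 : 1 * 1 * 1 ≤ q ^ 3 * (q ^ 3 - 1) * (q + 1) :=
      Nat.mul_le_mul (Nat.mul_le_mul (by omega) h1) (by omega)
    simpa using h2
  have hM1 : q ^ 3 * (q ^ 3 - 1) * (q + 1) - 1 + 1 = q ^ 3 * (q ^ 3 - 1) * (q + 1) :=
    Nat.sub_add_cancel hpos
  -- g is coprime to M + 1 = q^3 (q^3 - 1)(q + 1)
  have hcop : Nat.Coprime g (q ^ 3 * (q ^ 3 - 1) * (q + 1)) := by
    rw [← hM1]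
    have ha := Nat.gcd_dvd_left g (q ^ 3 * (q ^ 3 - 1) * (q + 1) - 1 + 1)
    have hb := Nat.gcd_dvd_right g (q ^ 3 * (q ^ 3 - 1) * (q + 1) - 1 + 1)
    have hc : Nat.gcd g (q ^ 3 * (q ^ 3 - 1) * (q + 1) - 1 + 1)
        ∣ q ^ 3 * (q ^ 3 - 1) * (q + 1) - 1 := ha.trans hgM
    have hd := Nat.dvd_sub hb hc
    simpa using hd
  have cq3 : Nat.Coprime g (q ^ 3) :=
    hcop.coprime_dvd_right ⟨(q ^ 3 - 1) * (q + 1), by ring⟩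
  have cq1 : Nat.Coprime g (q + 1) := hcop.coprime_dvd_right (dvd_mul_left _ _)
  have cq3m1 : Nat.Coprime g (q ^ 3 - 1) :=
    hcop.coprime_dvd_right ⟨q ^ 3 * (q + 1), by ring⟩
  have cqm1 : Nat.Coprime g (q - 1) := by
    have hdvd : (q - 1) ∣ q ^ 3 - 1 := by
      simpa using Nat.sub_dvd_pow_sub_pow q 1 3
    exact cq3m1.coprime_dvd_right hdvd
  -- g divides q^2 - q + 1
  have h1 : q ^ 3 + 1 = (q + 1) * (q ^ 2 - q + 1) := by
    zify [hqsq]; ring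
  have hgd : g ∣ q ^ 2 - q + 1 := by
    rw [h1] at hgN
    have hre : q ^ 3 * ((q + 1) * (q ^ 2 - q + 1)) * (q - 1)
        = (q ^ 2 - q + 1) * (q ^ 3 * ((q + 1) * (q - 1))) := by ring
    rw [hre] at hgN
    exact Nat.Coprime.dvd_of_dvd_mul_right (cq3.mul_right (cq1.mul_right cqm1)) hgN
  -- g divides 2q + 1
  have hMeq : q ^ 3 * (q ^ 3 - 1) * (q + 1) - 1
      = (q + 1) ^ 2 * (q ^ 3 - 2) * (q ^ 2 - q + 1) + (2 * q + 1) := by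
    zify [hqsq, hpos, show (1 : ℕ) ≤ q ^ 3 by omega, show (2 : ℕ) ≤ q ^ 3 by omega]
    ring
  have hg2q1 : g ∣ 2 * q + 1 := by
    rw [hMeq] at hgM
    have hA : g ∣ (q + 1) ^ 2 * (q ^ 3 - 2) * (q ^ 2 - q + 1) := hgd.mul_left _
    have := Nat.dvd_sub hgM hA
    simpa using this
  -- conclude: 4(q^2 - q + 1) = (2q+1)(2q-3) + 7
  have hkey : 4 * (q ^ 2 - q + 1) = (2 * q + 1) * (2 * q - 3) + 7 := by
    zify [hqsq, show (3 : ℕ) ≤ 2 * q by omega]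
    ring
  have h7 : (7 : ℕ) = 4 * (q ^ 2 - q + 1) - (2 * q + 1) * (2 * q - 3) := by
    rw [hkey, Nat.add_sub_cancel_left]
  rw [h7]
  exact Nat.dvd_sub (hgd.mul_left 4) (hg2q1.mul_right _)
end

section
/- For every integer q ≥ 2, gcd( q¹⁶(q⁸−1)(q⁶−1)(q⁴−1)(q²−1) , q⁸(q⁸+q⁴+1) − 1 ) divides 64·(q⁴+1). -/
/-!
Put `v = q⁸(q⁸ + q⁴ + 1)`, so that `v - 1 = q¹⁶ + q¹² + q⁸ - 1`. Since `q ∣ v`, `v - 1` is prime to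
`q`. For `k = 8, 6, 4, 2`, an explicit Bézout identity in `ℤ[q]` shows that `gcd(q^k - 1, v - 1)`
divides `q⁴ + 1` for `k = 8` and `2` otherwise. As `gcd(a b, n) ∣ gcd(a, n) gcd(b, n)`, the full
gcd divides `8(q⁴ + 1)`.
-/

namespace Nat

theorem gcd_dvd_of_intCast_eq_add_mul {a b c : ℕ} (x y : ℤ) (h : (c : ℤ) = a * x + b * y) :
    gcd a b ∣ c := by
  simpa only [Int.gcd_natCast_natCast] using Int.gcd_dvd_iff.2 ⟨x, y, h⟩

theorem gcd_mul_dvd_mul_of_dvd {m n k r s : ℕ} (hm : gcd m k ∣ r) (hn : gcd n k ∣ s) :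
    gcd (m * n) k ∣ r * s := by
  rw [gcd_comm] at hm hn ⊢
  exact (gcd_mul_dvd_mul_gcd k m n).trans (mul_dvd_mul hm hn)

theorem coprime_pow_left_of_dvd_add_one {q n : ℕ} (k : ℕ) (h : q ∣ n + 1) : Coprime (q ^ k) n :=
  (Coprime.coprime_dvd_left h (coprime_self_add_left.2 (coprime_one_left n))).pow_left k

end Nat

def f4B4Index (q : ℕ) : ℕ := q ^ 8 * (q ^ 8 + q ^ 4 + 1)

section

variable {q : ℕ}

theorem one_le_f4B4Index (hq : 1 ≤ q) : 1 ≤ f4B4Index q :=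
  Nat.one_le_iff_ne_zero.2 (by unfold f4B4Index; positivity)

theorem coprime_pow_f4B4Index_sub_one (hq : 1 ≤ q) (k : ℕ) :
    (q ^ k).Coprime (f4B4Index q - 1) := by
  apply Nat.coprime_pow_left_of_dvd_add_one
  rw [Nat.sub_add_cancel (one_le_f4B4Index hq)]
  exact (dvd_pow_self q (by norm_num)).mul_right _

theorem intCast_pow_sub_one (hq : 1 ≤ q) (k : ℕ) : ((q ^ k - 1 : ℕ) : ℤ) = (q : ℤ) ^ k - 1 := by
  rw [Nat.cast_sub (Nat.one_le_pow k q hq), Nat.cast_pow, Nat.cast_one]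

theorem intCast_f4B4Index_sub_one (hq : 1 ≤ q) :
    ((f4B4Index q - 1 : ℕ) : ℤ) = (q : ℤ) ^ 16 + (q : ℤ) ^ 12 + (q : ℤ) ^ 8 - 1 := by
  rw [Nat.cast_sub (one_le_f4B4Index hq), f4B4Index]
  push_cast
  ring

theorem gcd_pow_sub_one_f4B4Index_sub_one_dvd (hq : 1 ≤ q) {k c : ℕ} (x y : ℤ)
    (h : (c : ℤ) = ((q : ℤ) ^ k - 1) * x + ((q : ℤ) ^ 16 + (q : ℤ) ^ 12 + (q : ℤ) ^ 8 - 1) * y) :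
    (q ^ k - 1).gcd (f4B4Index q - 1) ∣ c := by
  apply Nat.gcd_dvd_of_intCast_eq_add_mul x y
  rwa [intCast_pow_sub_one hq, intCast_f4B4Index_sub_one hq]

theorem gcd_pow_eight_sub_one_f4B4Index_sub_one_dvd (hq : 1 ≤ q) :
    (q ^ 8 - 1).gcd (f4B4Index q - 1) ∣ q ^ 4 + 1 :=
  gcd_pow_sub_one_f4B4Index_sub_one_dvd hq (-(q ^ 8 + q ^ 4 + 2)) 1 (by push_cast; ring)

theorem gcd_pow_six_sub_one_f4B4Index_sub_one_dvd (hq : 1 ≤ q) :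
    (q ^ 6 - 1).gcd (f4B4Index q - 1) ∣ 2 :=
  gcd_pow_sub_one_f4B4Index_sub_one_dvd hq
    (-(q ^ 14 + q ^ 12 + 2 * q ^ 8 + q ^ 6 + q ^ 4 + q ^ 2 + 1)) (q ^ 4 + q ^ 2 - 1)
    (by push_cast; ring)

theorem gcd_pow_four_sub_one_f4B4Index_sub_one_dvd (hq : 1 ≤ q) :
    (q ^ 4 - 1).gcd (f4B4Index q - 1) ∣ 2 :=
  gcd_pow_sub_one_f4B4Index_sub_one_dvd hq (-(q ^ 12 + 2 * q ^ 8 + 3 * q ^ 4 + 3)) 1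
    (by push_cast; ring)

theorem gcd_pow_two_sub_one_f4B4Index_sub_one_dvd (hq : 1 ≤ q) :
    (q ^ 2 - 1).gcd (f4B4Index q - 1) ∣ 2 :=
  gcd_pow_sub_one_f4B4Index_sub_one_dvd hq
    (-(q ^ 14 + q ^ 12 + 2 * q ^ 10 + 2 * q ^ 8 + 3 * q ^ 6 + 3 * q ^ 4 + 3 * q ^ 2 + 3)) 1
    (by push_cast; ring)

end

/-- For every integer `q ≥ 2`,
`gcd(q¹⁶(q⁸-1)(q⁶-1)(q⁴-1)(q²-1), q⁸(q⁸+q⁴+1) - 1)` divides `64(q⁴+1)`. -/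
theorem f4_b4_gcd (q : ℕ) (hq : 2 ≤ q) :
    Nat.gcd (q ^ 16 * (q ^ 8 - 1) * (q ^ 6 - 1) * (q ^ 4 - 1) * (q ^ 2 - 1))
      (q ^ 8 * (q ^ 8 + q ^ 4 + 1) - 1) ∣ 64 * (q ^ 4 + 1) := by
  have hq' : 1 ≤ q := by omega
  have h := Nat.gcd_mul_dvd_mul_of_dvd (Nat.gcd_mul_dvd_mul_of_dvd (Nat.gcd_mul_dvd_mul_of_dvd
    (Nat.gcd_mul_dvd_mul_of_dvd (dvd_of_eq (coprime_pow_f4B4Index_sub_one hq' 16))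
      (gcd_pow_eight_sub_one_f4B4Index_sub_one_dvd hq'))
    (gcd_pow_six_sub_one_f4B4Index_sub_one_dvd hq'))
    (gcd_pow_four_sub_one_f4B4Index_sub_one_dvd hq'))
    (gcd_pow_two_sub_one_f4B4Index_sub_one_dvd hq')
  exact h.trans ⟨8, by ring⟩
end

section
/- For every even integer q ≥ 2 and every positive integer v with 2v = q⁸(q⁴−q²+1)(q³+1)(q+1), the number gcd( 2q⁴(q²+1)²(q−1)² , v − 1 ) divides 32. -/
/-- If `g` is odd and divides `4`, then `g = 1`. -/
lemma odd_dvd_four (g : ℕ) (hg : ¬ 2 ∣ g) (h : g ∣ 4) : g = 1 := by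
  have := Nat.le_of_dvd (by norm_num) h
  interval_cases g <;> omega

/-- For every even integer `q ≥ 2` and every positive integer `v` with
`2v = q⁸(q⁴-q²+1)(q³+1)(q+1)`, the number `gcd(2q⁴(q²+1)²(q-1)², v-1)` divides `32`. -/
theorem f4twisted_sz_wr2_gcd (q v : ℕ) (hq : 2 ≤ q) (hqe : Even q) (hv : 0 < v)
    (h2v : 2 * v = q ^ 8 * (q ^ 4 - q ^ 2 + 1) * (q ^ 3 + 1) * (q + 1)) :
    Nat.gcd (2 * q ^ 4 * (q ^ 2 + 1) ^ 2 * (q - 1) ^ 2) (v - 1) ∣ 32 := by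
  -- v is even, hence v - 1 is odd
  obtain ⟨k, hk⟩ := hqe
  have hveven : 2 ∣ v := by
    have h4 : 4 ∣ 2 * v := by
      rw [h2v, hk]
      have : (4 : ℕ) ∣ (k + k) ^ 8 := ⟨2 ^ 6 * k ^ 8, by ring⟩
      exact Dvd.dvd.mul_right (Dvd.dvd.mul_right (Dvd.dvd.mul_right this _) _) _
    omega
  have hvodd : ¬ 2 ∣ (v - 1) := by omega
  -- cast of 2v to ℤ
  have hq2 : q ^ 2 ≤ q ^ 4 := Nat.pow_le_pow_right (by omega) (by omega)
  have h2vZ : (2 * v : ℤ) = (q : ℤ) ^ 8 * ((q : ℤ) ^ 4 - (q : ℤ) ^ 2 + 1) *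
      ((q : ℤ) ^ 3 + 1) * ((q : ℤ) + 1) := by
    have := congrArg (fun n : ℕ => (n : ℤ)) h2v
    push_cast [Nat.cast_sub hq2] at this
    linarith
  -- generic lemma: if m divides 2v - c in ℤ with c - 2 dividing 4, then gcd m (v-1) = 1
  have key : ∀ m c : ℕ, ((m : ℤ) ∣ (2 * v : ℤ) - (c : ℤ)) → ((c : ℤ) - 2 ∣ 4) →
      Nat.Coprime m (v - 1) := by
    intro m c hm hc
    have hg1 : Nat.gcd m (v - 1) ∣ m := Nat.gcd_dvd_left _ _
    have hg2 : Nat.gcd m (v - 1) ∣ v - 1 := Nat.gcd_dvd_right _ _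
    have hgo : ¬ 2 ∣ Nat.gcd m (v - 1) := fun h => hvodd (h.trans hg2)
    have hz1 : ((Nat.gcd m (v - 1) : ℤ)) ∣ (2 * v : ℤ) - (c : ℤ) :=
      (Int.natCast_dvd_natCast.mpr hg1).trans hm
    have hz2 : ((Nat.gcd m (v - 1) : ℤ)) ∣ 2 * ((v : ℤ) - 1) := by
      have : ((Nat.gcd m (v - 1) : ℤ)) ∣ ((v - 1 : ℕ) : ℤ) :=
        Int.natCast_dvd_natCast.mpr hg2
      have hc1 : ((v - 1 : ℕ) : ℤ) = (v : ℤ) - 1 := by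
        have : 1 ≤ v := hv
        push_cast [Nat.cast_sub this]
        ring
      rw [hc1] at this
      exact Dvd.dvd.mul_left this 2
    have hz3 : ((Nat.gcd m (v - 1) : ℤ)) ∣ ((c : ℤ) - 2) := by
      have : (2 * v : ℤ) - (c : ℤ) - (2 * ((v : ℤ) - 1)) = -((c : ℤ) - 2) := by ring
      have h' := dvd_sub hz1 hz2
      rw [this] at h'
      exact (dvd_neg).mp h'
    have hz4 : ((Nat.gcd m (v - 1) : ℤ)) ∣ (4 : ℤ) := hz3.trans hc
    have hn4 : Nat.gcd m (v - 1) ∣ 4 := by exact_mod_cast hz4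
    exact odd_dvd_four _ hgo hn4
  -- coprime with 2
  have c2 : Nat.Coprime 2 (v - 1) := by
    rw [Nat.coprime_two_left]
    exact Nat.odd_iff.mpr (by omega)
  -- coprime with q^4 : q^4 ∣ 2v, so c = 0
  have cq : Nat.Coprime (q ^ 4) (v - 1) := by
    apply key (q ^ 4) 0
    · rw [h2vZ]
      push_cast
      refine ⟨(q : ℤ) ^ 4 * ((q : ℤ) ^ 4 - (q : ℤ) ^ 2 + 1) * ((q : ℤ) ^ 3 + 1) *
        ((q : ℤ) + 1), by ring⟩
    · norm_num
  -- coprime with q^2 + 1 : 2v ≡ 6 mod q^2+1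
  have cq1 : Nat.Coprime ((q ^ 2 + 1) ^ 2) (v - 1) := by
    apply Nat.Coprime.pow_left
    apply key (q ^ 2 + 1) 6
    · rw [h2vZ]
      push_cast
      refine ⟨(q:ℤ)^14 + (q:ℤ)^13 - 2*(q:ℤ)^12 - (q:ℤ)^11 + 4*(q:ℤ)^10 + (q:ℤ)^9
        - 5*(q:ℤ)^8 + 6*(q:ℤ)^6 - 6*(q:ℤ)^4 + 6*(q:ℤ)^2 - 6, by ring⟩
    · norm_num
  -- coprime with q - 1 : 2v ≡ 4 mod q-1
  have cq2 : Nat.Coprime ((q - 1) ^ 2) (v - 1) := by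
    apply Nat.Coprime.pow_left
    apply key (q - 1) 4
    · have hc1 : ((q - 1 : ℕ) : ℤ) = (q : ℤ) - 1 := by
        have : 1 ≤ q := by omega
        push_cast [Nat.cast_sub this]; ring
      rw [h2vZ, hc1]
      push_cast
      refine ⟨(q:ℤ)^15 + 2*(q:ℤ)^14 + (q:ℤ)^13 + (q:ℤ)^12 + 3*(q:ℤ)^11 + 3*(q:ℤ)^10
        + 2*(q:ℤ)^9 + 3*(q:ℤ)^8 + 4*(q:ℤ)^7 + 4*(q:ℤ)^6 + 4*(q:ℤ)^5 + 4*(q:ℤ)^4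
        + 4*(q:ℤ)^3 + 4*(q:ℤ)^2 + 4*(q:ℤ) + 4, by ring⟩
    · norm_num
  have : Nat.Coprime (2 * q ^ 4 * (q ^ 2 + 1) ^ 2 * (q - 1) ^ 2) (v - 1) :=
    ((c2.mul cq).mul cq1).mul cq2
  rw [this]
  norm_num
end

section
/- For every even integer q ≥ 2 and every positive integer v with 2v = q¹⁶(q⁸+q⁴+1)(q⁶−1)(q²−1), the number gcd( 2q⁸(q⁸−1)(q⁴−1) , v − 1 ) divides 50·(q⁴+1). -/
/-!
Write `N = 2q⁸(q⁸-1)(q⁴-1) = 2q⁸(q²-1)² · (q⁴+1)(q²+1)²`. Every prime factor of `2q(q²-1)` divides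
`v`, hence not `v - 1`, so `gcd(N, v-1)` divides `(q⁴+1)(q²+1)²`. Modulo `q²+1` we have `q² ≡ -1`,
so `2v ≡ 1·3·(-2)·(-2) = 12`, and as `q²+1` is odd, `v - 1 ≡ 5`; thus `gcd(q²+1, v-1) ∣ 5`.
-/

namespace Nat

theorem coprime_sub_one_of_dvd {m v : ℕ} (hv : 0 < v) (hm : m ∣ v) : Coprime m (v - 1) :=
  ((coprime_self_sub_right hv).2 (coprime_one_right v)).coprime_dvd_left hm

theorem gcd_dvd_of_modEq {n a c : ℕ} (h : a ≡ c [MOD n]) : gcd n a ∣ c := by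
  rw [gcd_comm, h.gcd_eq, gcd_comm]
  exact gcd_dvd_right n c

theorem gcd_mul_sq_dvd {a b c x : ℕ} (h : gcd b x ∣ c) : gcd (a * b ^ 2) x ∣ a * c ^ 2 := by
  rw [gcd_comm] at h ⊢
  calc gcd x (a * b ^ 2) ∣ gcd x a * (gcd x b * gcd x b) :=
        (gcd_mul_dvd_mul_gcd x a _).trans (mul_dvd_mul_left _ (sq b ▸ gcd_mul_dvd_mul_gcd x b b))
    _ ∣ a * c ^ 2 := sq c ▸ mul_dvd_mul (gcd_dvd_right x a) (mul_dvd_mul h h)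

end Nat

theorem pow_eight_sub_one_mul_pow_four_sub_one (q : ℕ) :
    (q ^ 8 - 1) * (q ^ 4 - 1) = (q ^ 2 - 1) ^ 2 * ((q ^ 4 + 1) * (q ^ 2 + 1) ^ 2) := by
  rcases q.eq_zero_or_pos with rfl | hq
  · simp
  have h2 : 1 ≤ q ^ 2 := Nat.one_le_pow _ _ hq
  have h4 : 1 ≤ q ^ 4 := Nat.one_le_pow _ _ hq
  have h8 : 1 ≤ q ^ 8 := Nat.one_le_pow _ _ hq
  zify [h2, h4, h8]
  ring

theorem two_mul_mul_sq_sub_one_dvd {q v : ℕ} (hqe : Even q)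
    (h2v : 2 * v = q ^ 16 * (q ^ 8 + q ^ 4 + 1) * (q ^ 6 - 1) * (q ^ 2 - 1)) :
    2 * q * (q ^ 2 - 1) ∣ v := by
  obtain ⟨k, rfl⟩ := hqe
  refine Nat.dvd_of_mul_dvd_mul_left two_pos
    ⟨2 ^ 13 * k ^ 15 * ((k + k) ^ 8 + (k + k) ^ 4 + 1) * ((k + k) ^ 6 - 1), ?_⟩
  rw [h2v]
  ring

theorem sub_one_modEq_five {q v : ℕ} (hqe : Even q) (hv : 0 < v)
    (h2v : 2 * v = q ^ 16 * (q ^ 8 + q ^ 4 + 1) * (q ^ 6 - 1) * (q ^ 2 - 1)) :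
    v - 1 ≡ 5 [MOD q ^ 2 + 1] := by
  have hq : 0 < q := Nat.pos_of_ne_zero <| by
    rintro rfl
    simp at h2v
    omega
  have hz : (2 * v : ℤ) = ((q : ℤ) ^ 2) ^ 8 * (((q : ℤ) ^ 2) ^ 4 + ((q : ℤ) ^ 2) ^ 2 + 1) *
      (((q : ℤ) ^ 2) ^ 3 - 1) * ((q : ℤ) ^ 2 - 1) := by
    have h2 : 1 ≤ q ^ 2 := Nat.one_le_pow _ _ hq
    have h6 : 1 ≤ q ^ 6 := Nat.one_le_pow _ _ hq
    zify [h2, h6] at h2v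
    rw [h2v]
    ring
  have hsq : (q : ℤ) ^ 2 ≡ -1 [ZMOD (q ^ 2 + 1 : ℕ)] :=
    Int.modEq_iff_dvd.2 ⟨-1, by push_cast; ring⟩
  have h12 : (2 * v : ℤ) ≡ 2 * 6 [ZMOD (q ^ 2 + 1 : ℕ)] := by
    rw [hz]
    calc _ ≡ (-1) ^ 8 * ((-1) ^ 4 + (-1) ^ 2 + 1) * ((-1) ^ 3 - 1) * (-1 - 1)
          [ZMOD (q ^ 2 + 1 : ℕ)] := by gcongr
      _ = 2 * 6 := by norm_num
  have hodd : Nat.gcd (q ^ 2 + 1) 2 = 1 := by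
    obtain ⟨k, rfl⟩ := hqe
    exact Nat.coprime_two_right.2 ⟨2 * k ^ 2, by ring⟩
  have h6 : v ≡ 6 [MOD q ^ 2 + 1] :=
    Nat.ModEq.cancel_left_of_coprime hodd (Int.natCast_modEq_iff.1 (by exact_mod_cast h12))
  exact Nat.ModEq.add_right_cancel' 1 (by rwa [Nat.sub_add_cancel hv])

theorem f4_sp4q2_gcd_general (q v : ℕ) (hqe : Even q) (hv : 0 < v)
    (h2v : 2 * v = q ^ 16 * (q ^ 8 + q ^ 4 + 1) * (q ^ 6 - 1) * (q ^ 2 - 1)) :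
    Nat.gcd (2 * q ^ 8 * (q ^ 8 - 1) * (q ^ 4 - 1)) (v - 1) ∣ 50 * (q ^ 4 + 1) := by
  have hcop : Nat.Coprime (2 * q ^ 8 * (q ^ 2 - 1) ^ 2) (v - 1) := by
    have hrad := Nat.coprime_sub_one_of_dvd hv (two_mul_mul_sq_sub_one_dvd hqe h2v)
    exact (hrad.pow_left 8).coprime_dvd_left ⟨2 ^ 7 * (q ^ 2 - 1) ^ 6, by ring⟩
  have h5 : Nat.gcd (q ^ 2 + 1) (v - 1) ∣ 5 :=
    Nat.gcd_dvd_of_modEq (sub_one_modEq_five hqe hv h2v)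
  rw [mul_assoc (2 * q ^ 8), pow_eight_sub_one_mul_pow_four_sub_one, ← mul_assoc,
    hcop.gcd_mul_left_cancel]
  exact (Nat.gcd_mul_sq_dvd h5).trans ⟨2, by ring⟩

/-- For every even integer `q ≥ 2` and every positive integer `v` with
`2v = q¹⁶(q⁸+q⁴+1)(q⁶-1)(q²-1)`, the number `gcd(2q⁸(q⁸-1)(q⁴-1), v-1)`
divides `50(q⁴+1)`. -/
theorem f4_sp4q2_gcd (q v : ℕ) (hq : 2 ≤ q) (hqe : Even q) (hv : 0 < v)
    (h2v : 2 * v = q ^ 16 * (q ^ 8 + q ^ 4 + 1) * (q ^ 6 - 1) * (q ^ 2 - 1)) :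
    Nat.gcd (2 * q ^ 8 * (q ^ 8 - 1) * (q ^ 4 - 1)) (v - 1) ∣ 50 * (q ^ 4 + 1) :=
  f4_sp4q2_gcd_general q v hqe hv h2v
end

section
/- For every integer q ≥ 2, setting v = (q³+1)(q⁴+1)(q⁶+1)(q⁴+q²+1)(q⁸+q⁷+q⁶+q⁵+q⁴+q³+q²+q+1), one has: q divides v−1, q² does not divide v−1, and q⁴+q³+q²+q+1 divides v−1. -/
/-- For every integer `q ≥ 2`, setting
`v = (q³+1)(q⁴+1)(q⁶+1)(q⁴+q²+1)(q⁸+q⁷+q⁶+q⁵+q⁴+q³+q²+q+1)`, one has: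
`q` divides `v-1`, `q²` does not divide `v-1`, and `q⁴+q³+q²+q+1` divides `v-1`. -/
theorem e6_p3_vminus1 (q : ℕ) (hq : 2 ≤ q)
    (v : ℕ)
    (hv : v = (q ^ 3 + 1) * (q ^ 4 + 1) * (q ^ 6 + 1) * (q ^ 4 + q ^ 2 + 1) *
      (q ^ 8 + q ^ 7 + q ^ 6 + q ^ 5 + q ^ 4 + q ^ 3 + q ^ 2 + q + 1)) :
    q ∣ v - 1 ∧ ¬ q ^ 2 ∣ v - 1 ∧ (q ^ 4 + q ^ 3 + q ^ 2 + q + 1) ∣ v - 1 := by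
  obtain ⟨B, hB⟩ : ∃ B : ℕ, B = 2 * q ^ 0 + 3 * q ^ 1 + 5 * q ^ 2 + 6 * q ^ 3 + 8 * q ^ 4 +
      10 * q ^ 5 + 12 * q ^ 6 + 13 * q ^ 7 + 15 * q ^ 8 + 16 * q ^ 9 + 16 * q ^ 10 +
      16 * q ^ 11 + 16 * q ^ 12 + 15 * q ^ 13 + 13 * q ^ 14 + 12 * q ^ 15 + 10 * q ^ 16 +
      8 * q ^ 17 + 6 * q ^ 18 + 5 * q ^ 19 + 3 * q ^ 20 + 2 * q ^ 21 + 1 * q ^ 22 +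
      1 * q ^ 23 := ⟨_, rfl⟩
  obtain ⟨D, hD⟩ : ∃ D : ℕ, D = 1 * q ^ 1 + 1 * q ^ 2 + 1 * q ^ 3 + 2 * q ^ 4 + 1 * q ^ 5 +
      3 * q ^ 6 + 3 * q ^ 7 + 3 * q ^ 8 + 3 * q ^ 9 + 3 * q ^ 10 + 4 * q ^ 11 + 3 * q ^ 12 +
      3 * q ^ 13 + 3 * q ^ 14 + 2 * q ^ 15 + 2 * q ^ 16 + 2 * q ^ 17 + 1 * q ^ 18 +
      1 * q ^ 19 + 1 * q ^ 21 := ⟨_, rfl⟩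
  have hvC : v = q * (q * B + 1) + 1 := by rw [hv, hB]; ring
  have hvD : v = (q ^ 4 + q ^ 3 + q ^ 2 + q + 1) * D + 1 := by rw [hv, hD]; ring
  have h1 : v - 1 = q * (q * B + 1) := by rw [hvC]; simp
  have h2 : v - 1 = (q ^ 4 + q ^ 3 + q ^ 2 + q + 1) * D := by rw [hvD]; simp
  refine ⟨⟨q * B + 1, h1⟩, ?_, ⟨D, h2⟩⟩
  rintro ⟨k, hk⟩
  rw [h1, pow_two, mul_assoc] at hk
  have hq0 : 0 < q := by omega
  have hck : q * B + 1 = q * k := Nat.eq_of_mul_eq_mul_left hq0 hk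
  have hBk : B < k := by
    rcases Nat.lt_or_ge B k with h | h
    · exact h
    · exact absurd hck (by nlinarith [Nat.mul_le_mul_left q h])
  have : q * (B + 1) ≤ q * k := Nat.mul_le_mul_left q hBk
  nlinarith
end
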